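/- Let W be a graph product of primary or infinite cyclic groups over a finite graph Γ with vertex set V. If X ⊆ V is a lower cone with respect to the preorder ≤_τ (i.e., v ≤_τ w and w ∈ X imply v ∈ X), then the kernel K_X of the standard retraction R_X : W → W_X is invariant under every pure automorphism of W, i.e., under all factor automorphisms, partial conjugations, and dominated transvections. -/

import Mathlib

open scoped commutatorElement
/-- Relations of the graph product of cyclic groups: `v ^ (o v)` for each vertex
(`o v = 0` meaning infinite cyclic) and commutators along edges. -/
def gpRels (V : Type*) (Γ : SimpleGraph V) (o : V → ℕ) : Set (FreeGroup V) :=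
  {r | (∃ v : V, r = FreeGroup.of v ^ o v) ∨
       (∃ v w : V, Γ.Adj v w ∧ r = ⁅FreeGroup.of v, FreeGroup.of w⁆)}

/-- The graph product of cyclic groups of orders `o v` (0 = infinite) over `Γ`. -/
abbrev GP (V : Type*) (Γ : SimpleGraph V) (o : V → ℕ) := PresentedGroup (gpRels V Γ o)

/-- The generator of `GP V Γ o` corresponding to the vertex `v`. -/
def gpGen {V : Type*} {Γ : SimpleGraph V} {o : V → ℕ} (v : V) : GP V Γ o :=
  PresentedGroup.of v

/-- The star of a vertex: `v` itself together with its neighbours. -/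
def star {V : Type*} (Γ : SimpleGraph V) (v : V) : Set V :=
  {w | w = v ∨ Γ.Adj v w}

/-- The link of a vertex: its neighbours. -/
def link {V : Type*} (Γ : SimpleGraph V) (v : V) : Set V :=
  {w | Γ.Adj v w}

/-- The relation `v ≤_τ w`: either `G_v` is infinite and `Lk(v) ⊆ St(w)`, or
`G_v`, `G_w` have orders powers of the same prime and `St(v) ⊆ St(w)`. -/
def letau {V : Type*} (Γ : SimpleGraph V) (o : V → ℕ) (v w : V) : Prop :=
  (o v = 0 ∧ link Γ v ⊆ star Γ w) ∨
  (∃ (p k l : ℕ), p.Prime ∧ o v = p ^ k ∧ o w = p ^ l ∧ star Γ v ⊆ star Γ w)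

/-- `ψ` acts like a factor automorphism. -/
def IsFactorAuto {V : Type*} {Γ : SimpleGraph V} {o : V → ℕ} (ψ : GP V Γ o ≃* GP V Γ o) : Prop :=
  ∃ (v : V) (m : ℤ), ψ (gpGen v) = gpGen v ^ m ∧ ∀ z : V, z ≠ v → ψ (gpGen z) = gpGen z

/-- `ψ` acts like a partial conjugation. -/
def IsPartialConj {V : Type*} {Γ : SimpleGraph V} {o : V → ℕ} (ψ : GP V Γ o ≃* GP V Γ o) : Prop :=
  ∃ (v : V) (K : Set V),
    (∀ z ∈ K, z ≠ v ∧ ¬Γ.Adj v z) ∧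
    (∀ z ∈ K, ψ (gpGen z) = gpGen v * gpGen z * (gpGen v)⁻¹) ∧
    (∀ z : V, z ∉ K → ψ (gpGen z) = gpGen z)

/-- `ψ` acts like a dominated transvection `τ_{v,w}`: it sends `v` to `v * w ^ q`
for some `v ≤_τ w` and fixes all other generators. -/
def IsTransvection {V : Type*} {Γ : SimpleGraph V} {o : V → ℕ} (ψ : GP V Γ o ≃* GP V Γ o) : Prop :=
  ∃ (v w : V) (q : ℕ), v ≠ w ∧ letau Γ o v w ∧
    ψ (gpGen v) = gpGen v * gpGen w ^ q ∧ ∀ z : V, z ≠ v → ψ (gpGen z) = gpGen z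


section myaux
variable {V : Type*} {Γ : SimpleGraph V} {o : V → ℕ}

lemma gp_rel_one {r : FreeGroup V} (hr : r ∈ gpRels V Γ o) :
    PresentedGroup.mk (gpRels V Γ o) r = 1 :=
  (QuotientGroup.eq_one_iff _).2 (Subgroup.subset_normalClosure hr)

lemma gpGen_pow (v : V) : (gpGen v : GP V Γ o) ^ o v = 1 := by
  have : PresentedGroup.mk (gpRels V Γ o) (FreeGroup.of v ^ o v) = 1 :=
    gp_rel_one (Or.inl ⟨v, rfl⟩)
  simpa [gpGen, PresentedGroup.of, map_pow] using this

lemma gpGen_comm {v w : V} (h : Γ.Adj v w) :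
    Commute (gpGen v : GP V Γ o) (gpGen w) := by
  have : PresentedGroup.mk (gpRels V Γ o) ⁅FreeGroup.of v, FreeGroup.of w⁆ = 1 :=
    gp_rel_one (Or.inr ⟨v, w, h, rfl⟩)
  rw [map_commutatorElement] at this
  exact commutatorElement_eq_one_iff_commute.mp this

end myaux

theorem stmt16 (V : Type*) [Fintype V] (Γ : SimpleGraph V) (o : V → ℕ)
    (ho : ∀ v : V, o v = 0 ∨ ∃ p k : ℕ, p.Prime ∧ 0 < k ∧ o v = p ^ k)
    (X : Set V)
    (hX : ∀ v w : V, letau Γ o v w → w ∈ X → v ∈ X)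
    (R : GP V Γ o →* GP X (Γ.induce X) (fun v => o v))
    (hR1 : ∀ v : X, R (gpGen (v : V)) = gpGen v)
    (hR2 : ∀ v : V, v ∉ X → R (gpGen v) = 1)
    (ψ : GP V Γ o ≃* GP V Γ o)
    (hψ : IsFactorAuto ψ ∨ IsPartialConj ψ ∨ IsTransvection ψ) :
    ∀ x : GP V Γ o, R x = 1 → R (ψ x) = 1 := by
  classical
  have hker : ∀ v : V, v ∉ X → R (ψ (gpGen v)) = 1 := by
    intro v hv
    rcases hψ with ⟨u, m, h1, h2⟩ | ⟨u, K, hK, h1, h2⟩ | ⟨a, w, q, hne, hlt, h1, h2⟩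
    · by_cases hvu : v = u
      · subst hvu; rw [h1, map_zpow, hR2 v hv, one_zpow]
      · rw [h2 v hvu, hR2 v hv]
    · by_cases hvK : v ∈ K
      · rw [h1 v hvK, map_mul, map_mul, map_inv, hR2 v hv, mul_one, mul_inv_cancel]
      · rw [h2 v hvK, hR2 v hv]
    · by_cases hva : v = a
      · subst hva
        have hw : w ∉ X := fun hwX => hv (hX v w hlt hwX)
        rw [h1, map_mul, map_pow, hR2 v hv, hR2 w hw, one_pow, one_mul]
      · rw [h2 v hva, hR2 v hv]
  let f : X → GP X (Γ.induce X) (fun v => o v) := fun x => R (ψ (gpGen (x : V)))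
  have hrels : ∀ r ∈ gpRels X (Γ.induce X) (fun v => o v), FreeGroup.lift f r = 1 := by
    rintro r (⟨x, rfl⟩ | ⟨x, y, hadj, rfl⟩)
    · rw [map_pow, FreeGroup.lift_apply_of]
      show (R (ψ (gpGen (x : V)))) ^ o (x : V) = 1
      rw [← map_pow, ← map_pow, gpGen_pow, map_one, map_one]
    · rw [map_commutatorElement, FreeGroup.lift_apply_of, FreeGroup.lift_apply_of]
      apply commutatorElement_eq_one_iff_commute.mpr
      have hxy : Γ.Adj (x : V) (y : V) := hadj
      exact ((gpGen_comm hxy).map ψ.toMonoidHom).map R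
  let φ := PresentedGroup.toGroup hrels
  have key : R.comp ψ.toMonoidHom = φ.comp R := by
    apply PresentedGroup.ext
    intro v
    show R (ψ (gpGen v)) = φ (R (gpGen v))
    by_cases hv : v ∈ X
    · rw [hR1 ⟨v, hv⟩]
      show f ⟨v, hv⟩ = PresentedGroup.toGroup hrels (PresentedGroup.of (⟨v, hv⟩ : X))
      exact (PresentedGroup.toGroup.of hrels).symm
    · rw [hR2 v hv, map_one, hker v hv]
  intro x hx
  have hx2 := DFunLike.congr_fun key x
  simp only [MonoidHom.comp_apply, MulEquiv.coe_toMonoidHom] at hx2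
  rw [hx2, hx, map_one]
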